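/- The pre-abstraction 𝔣(V) = {(C,D) ∈ 𝓒 | CD^ω ∩ V ≠ ∅} and pre-concretization 𝔤(𝒱) = ⋃_{(C,D)∈𝒱} CD^ω form a Galois connection between (𝒫(Σ^{≤ω}), ⊆) and (𝒫(𝓒), ⊆) after composing with the closure operator: for every language V and closed set 𝒱, 𝔠(𝔣(V)) ⊆ 𝒱 iff V ⊆ 𝔤(𝒱), where 𝔠(𝒱) = ⋃_{n≥1}(𝔣∘𝔤)ⁿ(𝒱) is the least closed superset. -/

import Mathlib

variable {Q : Type*} {A : Type*}

/-- Reachability in a nondeterministic automaton: `q` is reachable from `p` reading `w`. -/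
def Reach (δ : Q → A → Set Q) : Q → List A → Q → Prop
  | p, [], q => p = q
  | p, a :: w, q => ∃ r ∈ δ p a, Reach δ r w q

/-- Reachability visiting some final state along the way (possibly the endpoints). -/
def ReachF (δ : Q → A → Set Q) (Fs : Set Q) (p : Q) (w : List A) (q : Q) : Prop :=
  ∃ u v r, w = u ++ v ∧ r ∈ Fs ∧ Reach δ p u r ∧ Reach δ r v q

/-- The relation ∼ : `w ∼ u` iff for all states `p q`, reachability and
reachability-through-final-states via `w` and via `u` coincide. -/
def Sim (δ : Q → A → Set Q) (Fs : Set Q) (w u : List A) : Prop :=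
  ∀ p q : Q, (Reach δ p w q ↔ Reach δ p u q) ∧ (ReachF δ Fs p w q ↔ ReachF δ Fs p u q)

/-- The class of a word in 𝒬 = Σ⁺/∼ ⊎ {[ε]} : for a nonempty word its ∼-class,
and `[ε] = {ε}` for the empty word. -/
def wordClass (δ : Q → A → Set Q) (Fs : Set Q) (w : List A) : Set (List A) :=
  {u | (w = [] ∧ u = []) ∨ (w ≠ [] ∧ u ≠ [] ∧ Sim δ Fs w u)}

/-- `C` is an element of 𝒬. -/
def IsClass (δ : Q → A → Set Q) (Fs : Set Q) (C : Set (List A)) : Prop :=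
  ∃ w : List A, C = wordClass δ Fs w

/-- Elementwise concatenation of languages of finite words. -/
def mulSet (L M : Set (List A)) : Set (List A) := Set.image2 (· ++ ·) L M

/-- Monoid multiplication of classes: the class of the concatenation of representatives. -/
def classMul (δ : Q → A → Set Q) (Fs : Set Q) (C D : Set (List A)) : Set (List A) :=
  {v | ∃ w ∈ C, ∃ u ∈ D, v ∈ wordClass δ Fs (w ++ u)}

/-- Finite star of a language. -/
def starSet (L : Set (List A)) : Set (List A) :=
  {w | ∃ l : List (List A), (∀ u ∈ l, u ∈ L) ∧ w = l.flatten}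

/-- Possibly infinite words over `A` : Σ^{≤ω}, as stable `Option`-valued streams. -/
def Word (A : Type*) : Type _ := {g : ℕ → Option A // ∀ n, g n = none → g (n + 1) = none}

/-- A finite word as an element of Σ^{≤ω}. -/
def ofList (w : List A) : Word A :=
  ⟨fun n => w[n]?, fun n h => by
    rw [List.getElem?_eq_none_iff] at *
    omega⟩

/-- An infinite word as an element of Σ^{≤ω}. -/
def ofStream (s : ℕ → A) : Word A := ⟨fun n => some (s n), fun n h => by simp at h⟩

/- The (possibly infinite) concatenation `f 0 · f 1 · f 2 ⋯` of a sequence of finite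
words, as an element of Σ^{≤ω}. -/
open Classical in
noncomputable def prodWord (f : ℕ → List A) : Word A :=
  ⟨fun n =>
    if h : ∃ k, n < ((List.range k).flatMap f).length then
      ((List.range h.choose).flatMap f)[n]?
    else none, by
    intro n hn
    dsimp only at hn ⊢
    by_cases h : ∃ k, n < ((List.range k).flatMap f).length
    · exfalso
      rw [dif_pos h, List.getElem?_eq_none_iff] at hn
      have := h.choose_spec
      omega
    · have h2 : ¬ ∃ k, n + 1 < ((List.range k).flatMap f).length := by
        push_neg at h ⊢
        intro k
        have := h k
        omega
      rw [dif_neg h2]⟩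

/-- Concatenation of a finite word with a possibly infinite word. -/
def catWord (u : List A) (w : Word A) : Word A :=
  ⟨fun n => if n < u.length then u[n]? else w.1 (n - u.length), by
    intro n hn
    dsimp only at hn ⊢
    by_cases h : n < u.length
    · exfalso
      rw [if_pos h, List.getElem?_eq_none_iff] at hn
      omega
    · rw [if_neg h] at hn
      have h2 : ¬ n + 1 < u.length := by omega
      rw [if_neg h2]
      have h3 : n + 1 - u.length = (n - u.length) + 1 := by omega
      rw [h3]
      exact w.2 _ hn⟩

/-- `CD^ω` : all words `w₀w₁w₂⋯` with `w₀ ∈ C` and `wᵢ ∈ D` for `i ≥ 1`. -/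
def omegaProd (C D : Set (List A)) : Set (Word A) :=
  {w | ∃ f : ℕ → List A, f 0 ∈ C ∧ (∀ i, 1 ≤ i → f i ∈ D) ∧ w = prodWord f}

/-- `L^ω` : all words `w₁w₂w₃⋯` with all `wᵢ ∈ L`. -/
def omegaPow (L : Set (List A)) : Set (Word A) :=
  {w | ∃ f : ℕ → List A, (∀ i, f i ∈ L) ∧ w = prodWord f}

/-- Acceptance of a finite word (as an NFA). -/
def NFAAccepts (δ : Q → A → Set Q) (q0 : Q) (Fs : Set Q) (w : List A) : Prop :=
  ∃ q ∈ Fs, Reach δ q0 w q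

/-- Büchi acceptance of an infinite word: a run from `q0` visiting `Fs` infinitely often. -/
def BuchiAccepts (δ : Q → A → Set Q) (q0 : Q) (Fs : Set Q) (s : ℕ → A) : Prop :=
  ∃ r : ℕ → Q, r 0 = q0 ∧ (∀ n, r (n + 1) ∈ δ (r n) (s n)) ∧ {n | r n ∈ Fs}.Infinite

/-- The language `L(𝔄) ⊆ Σ^{≤ω}` of the extended Büchi automaton: finite words accepted
as an NFA together with infinite words accepted as a Büchi automaton. -/
def LangOf (δ : Q → A → Set Q) (q0 : Q) (Fs : Set Q) : Set (Word A) :=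
  {w | (∃ l : List A, w = ofList l ∧ NFAAccepts δ q0 Fs l) ∨
       (∃ s : ℕ → A, w = ofStream s ∧ BuchiAccepts δ q0 Fs s)}

/-- The set 𝒬 of classes, as a type. -/
def QClass (δ : Q → A → Set Q) (Fs : Set Q) : Type _ := {C : Set (List A) // IsClass δ Fs C}

/-- The set 𝓒 of pairs `(C, D)` of classes with `CD = C` and `DD = D`, as a type. -/
def CPair (δ : Q → A → Set Q) (Fs : Set Q) : Type _ :=
  {p : Set (List A) × Set (List A) //
    IsClass δ Fs p.1 ∧ IsClass δ Fs p.2 ∧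
    classMul δ Fs p.1 p.2 = p.1 ∧ classMul δ Fs p.2 p.2 = p.2}

/-- The language `CD^ω` denoted by an element of 𝓒. -/
def concPair {δ : Q → A → Set Q} {Fs : Set Q} (p : CPair δ Fs) : Set (Word A) :=
  omegaProd p.1.1 p.1.2

/-- A subset 𝒱 ⊆ 𝓒 is closed: whenever `UV^ω ∩ CD^ω ≠ ∅` for `(C,D) ∈ 𝒱` and
`(U,V) ∈ 𝓒`, then `(U,V) ∈ 𝒱`. -/
def IsClosedC {δ : Q → A → Set Q} {Fs : Set Q} (𝒱 : Set (CPair δ Fs)) : Prop :=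
  ∀ p ∈ 𝒱, ∀ q : CPair δ Fs, (concPair q ∩ concPair p).Nonempty → q ∈ 𝒱

/-- Pre-abstraction 𝔣. -/
def frakF (δ : Q → A → Set Q) (Fs : Set Q) (V : Set (Word A)) : Set (CPair δ Fs) :=
  {p | (concPair p ∩ V).Nonempty}

/-- Pre-concretization 𝔤. -/
def frakG {δ : Q → A → Set Q} {Fs : Set Q} (𝒱 : Set (CPair δ Fs)) : Set (Word A) :=
  ⋃ p ∈ 𝒱, concPair p

/-- Closure 𝔠(𝒱) = ⋃_{n ≥ 1} (𝔣 ∘ 𝔤)ⁿ(𝒱). -/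
def frakC {δ : Q → A → Set Q} {Fs : Set Q} (𝒱 : Set (CPair δ Fs)) : Set (CPair δ Fs) :=
  ⋃ n : ℕ, (fun 𝒲 => frakF δ Fs (frakG 𝒲))^[n + 1] 𝒱

/-- Abstraction α_* -/
def alphaStar (δ : Q → A → Set Q) (Fs : Set Q) (U : Set (List A)) : Set (QClass δ Fs) :=
  {C | (C.1 ∩ U).Nonempty}

/-- Concretization γ_* -/
def gammaStar {δ : Q → A → Set Q} {Fs : Set Q} (𝒰 : Set (QClass δ Fs)) : Set (List A) :=
  ⋃ C ∈ 𝒰, C.1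

/-- Abstraction α_{≤ω}. -/
def alphaOmega (δ : Q → A → Set Q) (Fs : Set Q) (V : Set (Word A)) : Set (CPair δ Fs) :=
  frakC (frakF δ Fs V)

/-- Concretization γ_{≤ω}. -/
def gammaOmega {δ : Q → A → Set Q} {Fs : Set Q} (𝒱 : Set (CPair δ Fs)) : Set (Word A) :=
  frakG 𝒱

/-!
Every word of `Σ^{≤ω}` lies in some `CD^ω` with `(C, D) ∈ 𝓒`. A finite word `l` lies in
`[l][ε]^ω`. For an infinite word, Ramsey's theorem applied to the finitely many Reach/ReachF
profiles of its factors gives a factorization `u₀u₁u₂⋯` in which every product `uᵢ⋯uⱼ` with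
`1 ≤ i ≤ j` has one class `D`; then `DD = D` and `[u₀]D = [u₀]`. Hence `V ⊆ 𝔤(𝔣(V))`, and with
`𝔣(V) ⊆ 𝔠(𝔣(V))` this gives one direction. Conversely `𝔣` and `𝔤` are monotone, so
`V ⊆ 𝔤(𝒱)` gives `𝔣(V) ⊆ 𝔣(𝔤(𝒱)) = 𝒱`, and closedness keeps every iterate `(𝔣 ∘ 𝔤)ⁿ(𝔣(V))`
inside `𝒱`.
-/

section Congruence

variable (δ : Q → A → Set Q) (Fs : Set Q)

theorem reach_append (w u : List A) (p q : Q) :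
    Reach δ p (w ++ u) q ↔ ∃ r, Reach δ p w r ∧ Reach δ r u q := by
  induction w generalizing p with
  | nil => simp [Reach]
  | cons a w ih =>
    simp only [List.cons_append, Reach, ih]
    constructor
    · rintro ⟨r, hr, r', h1, h2⟩
      exact ⟨r', ⟨r, hr, h1⟩, h2⟩
    · rintro ⟨r', ⟨r, hr, h1⟩, h2⟩
      exact ⟨r, hr, r', h1, h2⟩

theorem reachF_append (w u : List A) (p q : Q) :
    ReachF δ Fs p (w ++ u) q ↔
      ∃ r, (ReachF δ Fs p w r ∧ Reach δ r u q) ∨ (Reach δ p w r ∧ ReachF δ Fs r u q) := by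
  constructor
  · rintro ⟨a, b, r₀, hab, hr₀, h₁, h₂⟩
    rcases List.append_eq_append_iff.1 hab with ⟨a', rfl, rfl⟩ | ⟨c', rfl, rfl⟩
    · obtain ⟨r, hw, ha'⟩ := (reach_append δ w a' p r₀).1 h₁
      exact ⟨r, Or.inr ⟨hw, a', b, r₀, rfl, hr₀, ha', h₂⟩⟩
    · obtain ⟨r, hc', hu⟩ := (reach_append δ c' u r₀ q).1 h₂
      exact ⟨r, Or.inl ⟨⟨a, c', r₀, rfl, hr₀, h₁, hc'⟩, hu⟩⟩
  · rintro ⟨r, ⟨⟨a, b, r₀, rfl, hr₀, h₁, h₂⟩, h₃⟩ | ⟨h₁, ⟨a, b, r₀, rfl, hr₀, h₂, h₃⟩⟩⟩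
    · exact ⟨a, b ++ u, r₀, List.append_assoc .., hr₀, h₁,
        (reach_append δ b u r₀ q).2 ⟨r, h₂, h₃⟩⟩
    · exact ⟨w ++ a, b, r₀, (List.append_assoc ..).symm, hr₀,
        (reach_append δ w a p r₀).2 ⟨r, h₁, h₂⟩, h₃⟩

variable {δ Fs}

theorem Sim.refl (w : List A) : Sim δ Fs w w :=
  fun _ _ => ⟨Iff.rfl, Iff.rfl⟩

theorem Sim.symm {w u : List A} (h : Sim δ Fs w u) : Sim δ Fs u w :=
  fun p q => ⟨(h p q).1.symm, (h p q).2.symm⟩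

theorem Sim.trans {w u v : List A} (h₁ : Sim δ Fs w u) (h₂ : Sim δ Fs u v) : Sim δ Fs w v :=
  fun p q => ⟨(h₁ p q).1.trans (h₂ p q).1, (h₁ p q).2.trans (h₂ p q).2⟩

theorem Sim.append {w w' u u' : List A} (h₁ : Sim δ Fs w w') (h₂ : Sim δ Fs u u') :
    Sim δ Fs (w ++ u) (w' ++ u') := by
  intro p q
  rw [reach_append, reach_append, reachF_append, reachF_append]
  exact ⟨exists_congr fun r => and_congr (h₁ p r).1 (h₂ r q).1, exists_congr fun r =>
    or_congr (and_congr (h₁ p r).2 (h₂ r q).1) (and_congr (h₁ p r).1 (h₂ r q).2)⟩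

theorem mem_wordClass_self (w : List A) : w ∈ wordClass δ Fs w := by
  by_cases h : w = []
  · exact Or.inl ⟨h, h⟩
  · exact Or.inr ⟨h, h, Sim.refl w⟩

theorem wordClass_eq_of_mem {w u : List A} (h : u ∈ wordClass δ Fs w) :
    wordClass δ Fs u = wordClass δ Fs w := by
  rcases h with ⟨rfl, rfl⟩ | ⟨hw, hu, hwu⟩
  · rfl
  · ext v
    constructor
    · rintro (⟨rfl, -⟩ | ⟨-, hv, huv⟩)
      · exact absurd rfl hu
      · exact Or.inr ⟨hw, hv, hwu.trans huv⟩
    · rintro (⟨rfl, -⟩ | ⟨-, hv, hwv⟩)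
      · exact absurd rfl hw
      · exact Or.inr ⟨hu, hv, hwu.symm.trans hwv⟩

theorem append_mem_wordClass_append {w u w' u' : List A} (hw : w' ∈ wordClass δ Fs w)
    (hu : u' ∈ wordClass δ Fs u) : w' ++ u' ∈ wordClass δ Fs (w ++ u) := by
  rcases hw with ⟨rfl, rfl⟩ | ⟨hw, hw', hww'⟩
  · simpa using hu
  rcases hu with ⟨rfl, rfl⟩ | ⟨hu, hu', huu'⟩
  · rw [List.append_nil, List.append_nil]
    exact Or.inr ⟨hw, hw', hww'⟩
  · exact Or.inr ⟨by simp [hw], by simp [hw'], hww'.append huu'⟩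

theorem classMul_wordClass (w u : List A) :
    classMul δ Fs (wordClass δ Fs w) (wordClass δ Fs u) = wordClass δ Fs (w ++ u) := by
  ext v
  constructor
  · rintro ⟨w', hw', u', hu', hv⟩
    rwa [wordClass_eq_of_mem (append_mem_wordClass_append hw' hu')] at hv
  · exact fun hv => ⟨w, mem_wordClass_self w, u, mem_wordClass_self u, hv⟩

end Congruence

section Ramsey

variable {K : Type*} [Finite K]

theorem Set.Infinite.exists_infinite_fiber {α : Type*} {S : Set α} (hS : S.Infinite)
    (g : α → K) : ∃ k, (S ∩ g ⁻¹' {k}).Infinite := by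
  by_contra! h
  refine hS ((Set.finite_iUnion h).subset fun x hx => ?_)
  exact Set.mem_iUnion.2 ⟨g x, hx, rfl⟩

theorem exists_mem_infinite_color_eq (c : ℕ → ℕ → K) {S : Set ℕ} (hS : S.Infinite) :
    ∃ x ∈ S, ∃ T ⊆ S, T.Infinite ∧ ∃ k, ∀ y ∈ T, x < y ∧ c x y = k := by
  obtain ⟨x, hx⟩ := hS.nonempty
  obtain ⟨k, hk⟩ := (hS.sdiff (Set.finite_Iic x)).exists_infinite_fiber (c x)
  refine ⟨x, hx, _, fun y hy => hy.1.1, hk, k, fun y hy => ⟨?_, hy.2⟩⟩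
  simpa using hy.1.2

theorem exists_strictMono_color_eq_left (c : ℕ → ℕ → K) :
    ∃ f : ℕ → ℕ, StrictMono f ∧ ∃ col : ℕ → K, ∀ m n, m < n → c (f m) (f n) = col m := by
  choose x hxS T hTS hT k hk using
    fun S : {S : Set ℕ // S.Infinite} => exists_mem_infinite_color_eq c S.2
  let S : ℕ → {S : Set ℕ // S.Infinite} :=
    fun n => (fun S => ⟨T S, hT S⟩)^[n] ⟨Set.univ, Set.infinite_univ⟩
  have hS_succ (n : ℕ) : (S (n + 1)).1 = T (S n) := by
    simp only [S, Function.iterate_succ_apply']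
  have hS_anti : Antitone fun n => (S n).1 :=
    antitone_nat_of_succ_le fun n => (hS_succ n).symm ▸ hTS (S n)
  have key (m n : ℕ) (hmn : m < n) : x (S m) < x (S n) ∧ c (x (S m)) (x (S n)) = k (S m) :=
    hk _ _ (hS_succ m ▸ hS_anti hmn (hxS (S n)))
  exact ⟨fun n => x (S n), fun m n h => (key m n h).1, fun n => k (S n), fun m n h => (key m n h).2⟩

theorem exists_strictMono_color_eq (c : ℕ → ℕ → K) :
    ∃ t : ℕ → ℕ, StrictMono t ∧ ∃ e, ∀ i j, i < j → c (t i) (t j) = e := by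
  obtain ⟨f, hf, col, hcol⟩ := exists_strictMono_color_eq_left c
  obtain ⟨e, he⟩ := Set.infinite_univ.exists_infinite_fiber col
  have he' : {n | col n = e}.Infinite := by rwa [Set.univ_inter] at he
  refine ⟨f ∘ Nat.nth (fun n => col n = e), hf.comp (Nat.nth_strictMono he'), e, fun i j hij => ?_⟩
  rw [Function.comp_apply, Function.comp_apply, hcol _ _ (Nat.nth_strictMono he' hij)]
  exact Nat.nth_mem_of_infinite he' i

end Ramsey

section Words

/-- The factor `s i ⋯ s (j - 1)` of an infinite word `s`. -/
def streamFactor (s : ℕ → A) (i j : ℕ) : List A := (List.range' i (j - i)).map s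

theorem streamFactor_ne_nil (s : ℕ → A) {i j : ℕ} (h : i < j) : streamFactor s i j ≠ [] := by
  simp only [streamFactor, ne_eq, List.map_eq_nil_iff, List.range'_eq_nil_iff]
  omega

theorem streamFactor_append (s : ℕ → A) {i j k : ℕ} (hij : i ≤ j) (hjk : j ≤ k) :
    streamFactor s i j ++ streamFactor s j k = streamFactor s i k := by
  rw [streamFactor, streamFactor, streamFactor, ← List.map_append,
    show k - i = (j - i) + (k - j) by omega,
    ← List.range'_append_1, show i + (j - i) = j by omega]

theorem flatMap_range_streamFactor (s : ℕ → A) {t : ℕ → ℕ} (ht : Monotone t) (k : ℕ) :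
    (List.range k).flatMap (fun i => streamFactor s (t i) (t (i + 1))) =
      streamFactor s (t 0) (t k) := by
  induction k with
  | zero => simp [streamFactor]
  | succ k ih =>
    rw [List.range_succ, List.flatMap_append, ih, List.flatMap_singleton,
      streamFactor_append s (ht k.zero_le) (ht k.le_succ)]

theorem Word.ext {w w' : Word A} (h : ∀ n, w.1 n = w'.1 n) : w = w' :=
  Subtype.ext (funext h)

theorem Word.apply_eq_none_of_le (w : Word A) {m n : ℕ} (hmn : m ≤ n) (hm : w.1 m = none) :
    w.1 n = none := by
  induction hmn with
  | refl => exact hm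
  | step _ ih => exact w.2 _ ih

theorem Word.exists_eq_ofList_or_ofStream (w : Word A) :
    (∃ l, w = ofList l) ∨ ∃ s, w = ofStream s := by
  classical
  by_cases hfin : ∃ N, w.1 N = none
  · have hsome (n : ℕ) (hn : n < Nat.find hfin) : (w.1 n).isSome :=
      Option.isSome_iff_ne_none.2 (Nat.find_min hfin hn)
    refine Or.inl ⟨List.ofFn fun n : Fin (Nat.find hfin) => (w.1 n).get (hsome n n.2),
      Word.ext fun n => ?_⟩
    by_cases hn : n < Nat.find hfin
    · show _ = (List.ofFn _)[n]?
      rw [List.getElem?_ofFn, dif_pos hn, Option.some_get]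
    · show _ = (List.ofFn _)[n]?
      rw [List.getElem?_ofFn, dif_neg hn]
      exact w.apply_eq_none_of_le (not_lt.1 hn) (Nat.find_spec hfin)
  · push Not at hfin
    exact Or.inr ⟨fun n => (w.1 n).get (Option.isSome_iff_ne_none.2 (hfin n)),
      Word.ext fun n => by simp [ofStream]⟩

theorem prodWord_apply_of_lt (f : ℕ → List A) {n k : ℕ}
    (h : n < ((List.range k).flatMap f).length) :
    (prodWord f).1 n = ((List.range k).flatMap f)[n]? := by
  have hex : ∃ k, n < ((List.range k).flatMap f).length := ⟨k, h⟩
  have hprefix {k₁ k₂ : ℕ} (hk : k₁ ≤ k₂) :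
      (List.range k₁).flatMap f <+: (List.range k₂).flatMap f := by
    obtain ⟨d, rfl⟩ := Nat.exists_eq_add_of_le hk
    rw [List.range_add, List.flatMap_append]
    exact List.prefix_append _ _
  simp only [prodWord, dif_pos hex]
  rcases le_total hex.choose k with hle | hle
  · rw [List.prefix_iff_getElem?.1 (hprefix hle) n hex.choose_spec, List.getElem?_eq_getElem]
  · rw [List.prefix_iff_getElem?.1 (hprefix hle) n h, List.getElem?_eq_getElem]

theorem prodWord_apply_of_length_le (f : ℕ → List A) {n : ℕ}
    (h : ∀ k, ((List.range k).flatMap f).length ≤ n) : (prodWord f).1 n = none := by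
  simp only [prodWord, dif_neg (not_exists.2 fun k => not_lt.2 (h k))]

theorem prodWord_ite_nil (l : List A) : prodWord (fun i => if i = 0 then l else []) = ofList l := by
  have hflat (k : ℕ) :
      (List.range k).flatMap (fun i => if i = 0 then l else []) = if k = 0 then [] else l := by
    induction k with
    | zero => simp
    | succ k ih => cases k <;> simp_all [List.range_succ]
  refine Word.ext fun n => ?_
  by_cases hn : n < l.length
  · rw [prodWord_apply_of_lt _ (k := 1) (by simpa [hflat] using hn), hflat]
    rfl
  · rw [prodWord_apply_of_length_le _ fun k => ?_]
    · exact (List.getElem?_eq_none (not_lt.1 hn)).symm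
    · rw [hflat]
      split
      · exact Nat.zero_le n
      · exact not_lt.1 hn

theorem prodWord_streamFactor (s : ℕ → A) {t : ℕ → ℕ} (ht : StrictMono t) (h0 : t 0 = 0) :
    prodWord (fun i => streamFactor s (t i) (t (i + 1))) = ofStream s := by
  refine Word.ext fun n => ?_
  have hn : n < t (n + 1) := lt_of_lt_of_le n.lt_succ_self (ht.le_apply)
  have hlen :
      n < ((List.range (n + 1)).flatMap fun i => streamFactor s (t i) (t (i + 1))).length := by
    rw [flatMap_range_streamFactor s ht.monotone, h0, streamFactor, List.length_map,
      List.length_range']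
    omega
  rw [prodWord_apply_of_lt _ hlen, flatMap_range_streamFactor s ht.monotone, h0]
  simp [streamFactor, ofStream, hn]

end Words

section Covering

variable (δ : Q → A → Set Q) (Fs : Set Q)

theorem exists_concPair_ofList (l : List A) : ∃ p : CPair δ Fs, ofList l ∈ concPair p := by
  refine ⟨⟨(wordClass δ Fs l, wordClass δ Fs []), ⟨l, rfl⟩, ⟨[], rfl⟩,
    by rw [classMul_wordClass, List.append_nil], by rw [classMul_wordClass, List.append_nil]⟩,
    fun i => if i = 0 then l else [], by simpa using mem_wordClass_self l,
    fun i hi => ?_, (prodWord_ite_nil l).symm⟩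
  show (if i = 0 then l else []) ∈ wordClass δ Fs []
  rw [if_neg (Nat.one_le_iff_ne_zero.1 hi)]
  exact mem_wordClass_self []

/-- A colouring of words with finitely many colours (for finite `Q`) that determines their
`Sim`-class. -/
def reachProfile (w : List A) : (Q → Q → Prop) × (Q → Q → Prop) :=
  (fun p q => Reach δ p w q, fun p q => ReachF δ Fs p w q)

theorem Sim.of_reachProfile_eq {w u : List A} (h : reachProfile δ Fs w = reachProfile δ Fs u) :
    Sim δ Fs w u := fun p q =>
  ⟨iff_of_eq congr($(congrArg Prod.fst h) p q), iff_of_eq congr($(congrArg Prod.snd h) p q)⟩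

theorem exists_strictMono_wordClass_streamFactor_eq [Finite Q] (s : ℕ → A) :
    ∃ t : ℕ → ℕ, StrictMono t ∧ ∀ i j, i < j →
      wordClass δ Fs (streamFactor s (t i) (t j)) =
        wordClass δ Fs (streamFactor s (t 0) (t 1)) := by
  obtain ⟨t, ht, e, he⟩ :=
    exists_strictMono_color_eq fun i j => reachProfile δ Fs (streamFactor s i j)
  refine ⟨t, ht, fun i j hij => wordClass_eq_of_mem (Or.inr ⟨?_, ?_, ?_⟩)⟩
  · exact streamFactor_ne_nil s (ht zero_lt_one)
  · exact streamFactor_ne_nil s (ht hij)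
  · exact Sim.of_reachProfile_eq δ Fs ((he 0 1 zero_lt_one).trans (he i j hij).symm)

theorem exists_concPair_ofStream [Finite Q] (s : ℕ → A) :
    ∃ p : CPair δ Fs, ofStream s ∈ concPair p := by
  obtain ⟨t, ht, hE⟩ := exists_strictMono_wordClass_streamFactor_eq δ Fs s
  set E := wordClass δ Fs (streamFactor s (t 0) (t 1))
  set C := wordClass δ Fs (streamFactor s 0 (t 1))
  have hmul {i j k : ℕ} (hij : i ≤ j) (hjk : j ≤ k) :
      classMul δ Fs (wordClass δ Fs (streamFactor s i j)) (wordClass δ Fs (streamFactor s j k)) =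
        wordClass δ Fs (streamFactor s i k) := by
    rw [classMul_wordClass, streamFactor_append s hij hjk]
  have hEE : classMul δ Fs E E = E := calc
    _ = classMul δ Fs (wordClass δ Fs (streamFactor s (t 1) (t 2)))
          (wordClass δ Fs (streamFactor s (t 2) (t 3))) := by
      rw [hE 1 2 (by simp), hE 2 3 (by simp)]
    _ = E := by rw [hmul (ht.monotone (by simp)) (ht.monotone (by simp)), hE 1 3 (by simp)]
  have hCE : classMul δ Fs C E = C := calc
    _ = classMul δ Fs C (wordClass δ Fs (streamFactor s (t 1) (t 2))) := by rw [hE 1 2 (by simp)]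
    _ = classMul δ Fs (wordClass δ Fs (streamFactor s 0 (t 0)))
          (wordClass δ Fs (streamFactor s (t 0) (t 2))) := by
      rw [hmul (Nat.zero_le _) (ht.monotone (by simp)),
        hmul (Nat.zero_le _) (ht.monotone (by simp))]
    _ = C := by rw [hE 0 2 (by simp), hmul (Nat.zero_le _) (ht.monotone (by simp))]
  let t' : ℕ → ℕ := fun i => if i = 0 then 0 else t i
  have ht' : StrictMono t' := strictMono_nat_of_lt_succ fun i => by
    rcases i with _ | i
    · simpa [t'] using (Nat.zero_le _).trans_lt (ht zero_lt_one)
    · simpa [t'] using ht i.succ.lt_succ_self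
  refine ⟨⟨(C, E), ⟨_, rfl⟩, ⟨_, rfl⟩, hCE, hEE⟩, fun i => streamFactor s (t' i) (t' (i + 1)),
    by simpa [t'] using mem_wordClass_self _, fun i hi => ?_,
    (prodWord_streamFactor s ht' rfl).symm⟩
  simp only [t', if_neg (Nat.one_le_iff_ne_zero.1 hi), Nat.add_one_ne_zero, if_false]
  exact hE i (i + 1) i.lt_succ_self ▸ mem_wordClass_self _

theorem exists_concPair [Finite Q] (w : Word A) : ∃ p : CPair δ Fs, w ∈ concPair p := by
  rcases w.exists_eq_ofList_or_ofStream with ⟨l, rfl⟩ | ⟨s, rfl⟩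
  · exact exists_concPair_ofList δ Fs l
  · exact exists_concPair_ofStream δ Fs s

end Covering

section Closure

variable {δ : Q → A → Set Q} {Fs : Set Q}

theorem frakF_mono : Monotone (frakF δ Fs) :=
  fun _ _ h _ hp => hp.mono (Set.inter_subset_inter_right _ h)

theorem frakG_mono : Monotone (frakG : Set (CPair δ Fs) → Set (Word A)) :=
  fun _ _ h => Set.biUnion_subset_biUnion_left h

theorem subset_frakG_frakF [Finite Q] (V : Set (Word A)) : V ⊆ frakG (frakF δ Fs V) := by
  intro v hv
  obtain ⟨p, hp⟩ := exists_concPair δ Fs v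
  exact Set.mem_biUnion ⟨v, hp, hv⟩ hp

theorem frakF_subset_frakC (V : Set (Word A)) : frakF δ Fs V ⊆ frakC (frakF δ Fs V) := by
  rintro p ⟨v, hvp, hvV⟩
  exact Set.mem_iUnion.2 ⟨0, v, hvp, Set.mem_biUnion ⟨v, hvp, hvV⟩ hvp⟩

theorem frakC_subset_of_closed {𝒱 𝒲 : Set (CPair δ Fs)} (h𝒱 : frakF δ Fs (frakG 𝒱) ⊆ 𝒱)
    (h𝒲 : 𝒲 ⊆ 𝒱) : frakC 𝒲 ⊆ 𝒱 := by
  have hiter (n : ℕ) : (fun 𝒰 => frakF δ Fs (frakG 𝒰))^[n] 𝒲 ⊆ 𝒱 := by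
    induction n with
    | zero => exact h𝒲
    | succ n ih =>
      rw [Function.iterate_succ_apply']
      exact (frakF_mono (frakG_mono ih)).trans h𝒱
  exact Set.iUnion_subset fun n => hiter (n + 1)

end Closure

theorem frak_galois_general {Q A : Type*} [Finite Q]
    (δ : Q → A → Set Q) (Fs : Set Q) (V : Set (Word A))
    (𝒱 : Set (CPair δ Fs)) (h𝒱 : frakF δ Fs (frakG 𝒱) = 𝒱) :
    frakC (frakF δ Fs V) ⊆ 𝒱 ↔ V ⊆ frakG 𝒱 := by
  constructor
  · intro h
    calc V ⊆ frakG (frakF δ Fs V) := subset_frakG_frakF V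
      _ ⊆ frakG (frakC (frakF δ Fs V)) := frakG_mono (frakF_subset_frakC V)
      _ ⊆ frakG 𝒱 := frakG_mono h
  · intro h
    exact frakC_subset_of_closed h𝒱.le (h𝒱 ▸ frakF_mono h)

/-- `𝔠 ∘ 𝔣` and `𝔤` form a Galois connection: for every language
`V ⊆ Σ^{≤ω}` and every closed `𝒱` (i.e. `𝔣(𝔤(𝒱)) = 𝒱`), `𝔠(𝔣(V)) ⊆ 𝒱 ↔ V ⊆ 𝔤(𝒱)`. -/
theorem frak_galois {Q A : Type*} [Finite Q] [Finite A]
    (δ : Q → A → Set Q) (Fs : Set Q) (V : Set (Word A))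
    (𝒱 : Set (CPair δ Fs)) (h𝒱 : frakF δ Fs (frakG 𝒱) = 𝒱) :
    frakC (frakF δ Fs V) ⊆ 𝒱 ↔ V ⊆ frakG 𝒱 :=
  frak_galois_general δ Fs V 𝒱 h𝒱
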